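/- Let n ≥ 1, c > 0, q > 0, a > 0, and let u : ℝⁿ × [0,∞) → ℝ be a smooth positive solution of ∂ₜu = Δu + c·u(1−u). Set W := u^{−q} and H₀ := |∇W|²/W² + a·c·(1 − W^{−1/q}). Then at every point (Δ − ∂ₜ)H₀ = (4(1−q)/q)·∇²W(∇W,∇W)/W³ + (2(q−2)/q)·|∇W|⁴/W⁴ + 2·‖∇²W‖²/W² + a·c²·W^{−1/q}·(1 − W^{−1/q}) + 2c·W^{−1/q}·|∇W|²/W², where ∇²W(∇W,∇W) = ∑_{i,j}(∂ᵢ∂ⱼW)(∂ᵢW)(∂ⱼW) and ‖∇²W‖² = ∑_{i,j}(∂ᵢ∂ⱼW)². -/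

import Mathlib

/-- Partial derivative in the `i`-th coordinate direction. -/
noncomputable def pd {n : ℕ} (i : Fin n) (f : (Fin n → ℝ) → ℝ) (x : Fin n → ℝ) : ℝ :=
  fderiv ℝ f x (Pi.single i 1)

/-- Euclidean Laplacian: sum of second partial derivatives. -/
noncomputable def lap {n : ℕ} (f : (Fin n → ℝ) → ℝ) (x : Fin n → ℝ) : ℝ :=
  ∑ i, pd i (pd i f) x

/-- `W = u^{-q}`. -/
noncomputable def Wfun {n : ℕ} (q : ℝ) (u : ℝ → (Fin n → ℝ) → ℝ) :
    ℝ → (Fin n → ℝ) → ℝ :=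
  fun t x => u t x ^ (-q : ℝ)

/-- `H₀ = |∇W|²/W² + ac·(1 − W^{−1/q})`. -/
noncomputable def H0fun {n : ℕ} (a c q : ℝ) (u : ℝ → (Fin n → ℝ) → ℝ) :
    ℝ → (Fin n → ℝ) → ℝ :=
  fun t x => (∑ i, (pd i (Wfun q u t) x) ^ 2) / (Wfun q u t x) ^ 2
    + a * c * (1 - Wfun q u t x ^ (-1 / q : ℝ))

open scoped Topology ContDiff

noncomputable def Dd {E : Type*} [NormedAddCommGroup E] [NormedSpace ℝ E]
    (v : E) (f : E → ℝ) (p : E) : ℝ := fderiv ℝ f p v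

theorem le_inf1 : (1 : WithTop ℕ∞) ≤ ∞ := by
  rw [show ((1:WithTop ℕ∞)) = ((1 : ℕ∞) : WithTop ℕ∞) from rfl]
  exact WithTop.coe_le_coe.mpr le_top

theorem le_inf2 : (2 : WithTop ℕ∞) ≤ ∞ := by
  rw [show ((2:WithTop ℕ∞)) = ((2 : ℕ∞) : WithTop ℕ∞) from rfl]
  exact WithTop.coe_le_coe.mpr le_top

theorem inf_add_one : (∞ : WithTop ℕ∞) + 1 ≤ ∞ := le_of_eq rfl

section DdLemmas
variable {E : Type*} [NormedAddCommGroup E] [NormedSpace ℝ E]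
  {f g : E → ℝ} {p v w : E}

theorem Dd_of_hasFDerivAt {L : E →L[ℝ] ℝ} (h : HasFDerivAt f L p) : Dd v f p = L v := by
  rw [Dd, h.fderiv]

theorem Dd_congr_nhds (h : f =ᶠ[nhds p] g) : Dd v f p = Dd v g p := by
  rw [Dd, Dd, Filter.EventuallyEq.fderiv_eq h]

theorem ContDiff.dd (hf : ContDiff ℝ ∞ f) (v : E) : ContDiff ℝ ∞ (Dd v f) :=
  (hf.fderiv_right inf_add_one).clm_apply contDiff_const

theorem ContDiff.diffAt (hf : ContDiff ℝ ∞ f) : DifferentiableAt ℝ f p :=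
  (hf.differentiable (lt_of_lt_of_le zero_lt_one le_inf1).ne').differentiableAt

theorem Dd_add (hf : DifferentiableAt ℝ f p) (hg : DifferentiableAt ℝ g p) :
    Dd v (fun p => f p + g p) p = Dd v f p + Dd v g p := by
  simpa [Dd] using Dd_of_hasFDerivAt (v := v) (hf.hasFDerivAt.fun_add hg.hasFDerivAt)

theorem Dd_sub (hf : DifferentiableAt ℝ f p) (hg : DifferentiableAt ℝ g p) :
    Dd v (fun p => f p - g p) p = Dd v f p - Dd v g p := by
  simpa [Dd] using Dd_of_hasFDerivAt (v := v) (hf.hasFDerivAt.fun_sub hg.hasFDerivAt)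

theorem Dd_const (c : ℝ) : Dd v (fun _ => c) p = 0 := by
  simpa using Dd_of_hasFDerivAt (v := v) (hasFDerivAt_const c p)

theorem Dd_mul (hf : DifferentiableAt ℝ f p) (hg : DifferentiableAt ℝ g p) :
    Dd v (fun p => f p * g p) p = f p * Dd v g p + g p * Dd v f p := by
  simpa [Dd] using Dd_of_hasFDerivAt (v := v) (hf.hasFDerivAt.fun_mul hg.hasFDerivAt)

theorem Dd_const_mul (c : ℝ) (hf : DifferentiableAt ℝ f p) :
    Dd v (fun p => c * f p) p = c * Dd v f p := by
  simpa [Dd] using Dd_of_hasFDerivAt (v := v) (hf.hasFDerivAt.const_mul c)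

theorem Dd_inv (hg : DifferentiableAt ℝ g p) (h0 : g p ≠ 0) :
    Dd v (fun p => (g p)⁻¹) p = -(Dd v g p) / (g p) ^ 2 := by
  have h := (hasFDerivAt_inv' (𝕜 := ℝ) (R := ℝ) h0).comp p hg.hasFDerivAt
  have h2 : HasFDerivAt (fun p => (g p)⁻¹)
      ((-ContinuousLinearMap.mulLeftRight ℝ ℝ (g p)⁻¹ (g p)⁻¹).comp (fderiv ℝ g p)) p := h
  rw [Dd_of_hasFDerivAt (v := v) h2]
  simp only [ContinuousLinearMap.comp_apply, ContinuousLinearMap.neg_apply,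
    ContinuousLinearMap.mulLeftRight_apply]
  rw [Dd, neg_div]
  congr 1
  rw [eq_div_iff (pow_ne_zero 2 h0)]
  field_simp

theorem Dd_div (hf : DifferentiableAt ℝ f p) (hg : DifferentiableAt ℝ g p) (h0 : g p ≠ 0) :
    Dd v (fun p => f p / g p) p
      = (Dd v f p * g p - f p * Dd v g p) / (g p) ^ 2 := by
  have e : (fun p => f p / g p) = fun p => f p * (g p)⁻¹ := by
    funext y; rw [div_eq_mul_inv]
  rw [e, Dd_mul hf (hg.fun_inv h0), Dd_inv hg h0]
  field_simp
  ring

theorem Dd_sum {ι : Type*} (s : Finset ι) (F : ι → E → ℝ)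
    (hF : ∀ i ∈ s, DifferentiableAt ℝ (F i) p) :
    Dd v (fun p => ∑ i ∈ s, F i p) p = ∑ i ∈ s, Dd v (F i) p := by
  simpa [Dd] using Dd_of_hasFDerivAt (v := v) (HasFDerivAt.fun_sum (fun i hi => (hF i hi).hasFDerivAt))

theorem Dd_rpow (r : ℝ) (hf : DifferentiableAt ℝ f p) (h0 : f p ≠ 0) :
    Dd v (fun p => f p ^ r) p = r * f p ^ (r - 1) * Dd v f p := by
  rw [Dd_of_hasFDerivAt (v := v) (hf.hasFDerivAt.rpow_const (Or.inl h0))]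
  simp [smul_eq_mul, Dd]

theorem Dd_comm (hf : ContDiff ℝ ∞ f) (p v w : E) :
    Dd v (Dd w f) p = Dd w (Dd v f) p := by
  have hdf : DifferentiableAt ℝ (fderiv ℝ f) p :=
    ((hf.fderiv_right inf_add_one).differentiable (lt_of_lt_of_le zero_lt_one le_inf1).ne').differentiableAt
  have key : ∀ a b : E, Dd a (Dd b f) p = fderiv ℝ (fderiv ℝ f) p a b := by
    intro a b
    have e : Dd b f = fun y => (fderiv ℝ f y) b := rfl
    rw [Dd, e, fderiv_clm_apply hdf (differentiableAt_const b)]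
    simp
  rw [key, key]
  exact (hf.contDiffAt.isSymmSndFDerivAt (by rw [minSmoothness_of_isRCLikeNormedField]; exact le_inf2)) v w

end DdLemmas

section Slice
variable {n : ℕ} {t : ℝ} {x : Fin n → ℝ}

theorem diff_slice_x {f : ℝ × (Fin n → ℝ) → ℝ} (hf : DifferentiableAt ℝ f (t, x)) :
    DifferentiableAt ℝ (fun y => f (t, y)) x :=
  hf.comp x (hasFDerivAt_prodMk_right t x).differentiableAt

theorem diff_slice_t {f : ℝ × (Fin n → ℝ) → ℝ} (hf : DifferentiableAt ℝ f (t, x)) :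
    DifferentiableAt ℝ (fun τ => f (τ, x)) t :=
  hf.comp t (hasFDerivAt_prodMk_left t x).differentiableAt

theorem pd_slice (f : ℝ × (Fin n → ℝ) → ℝ) (hf : DifferentiableAt ℝ f (t, x)) (i : Fin n) :
    pd i (fun y => f (t, y)) x = Dd ((0 : ℝ), Pi.single i (1:ℝ)) f (t, x) := by
  have h2 : HasFDerivAt (fun y => f (t, y))
      ((fderiv ℝ f (t, x)).comp (ContinuousLinearMap.inr ℝ ℝ (Fin n → ℝ))) x :=
    hf.hasFDerivAt.comp x (hasFDerivAt_prodMk_right t x)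
  rw [pd, h2.fderiv]; rfl

theorem deriv_slice (f : ℝ × (Fin n → ℝ) → ℝ) (hf : DifferentiableAt ℝ f (t, x)) :
    deriv (fun τ => f (τ, x)) t = Dd ((1 : ℝ), (0 : Fin n → ℝ)) f (t, x) := by
  have h2 : HasFDerivAt (fun τ => f (τ, x))
      ((fderiv ℝ f (t, x)).comp (ContinuousLinearMap.inl ℝ ℝ (Fin n → ℝ))) t :=
    hf.hasFDerivAt.comp t (hasFDerivAt_prodMk_left t x)
  rw [show deriv (fun τ => f (τ, x)) t = fderiv ℝ (fun τ => f (τ, x)) t 1 from rfl, h2.fderiv]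
  rfl

end Slice

noncomputable section MainDev

/-- Joint (time, space) version of `u`. -/
def Uf {n : ℕ} (u : ℝ → (Fin n → ℝ) → ℝ) : ℝ × (Fin n → ℝ) → ℝ := fun p => u p.1 p.2

def evx {n : ℕ} (i : Fin n) : ℝ × (Fin n → ℝ) := ((0:ℝ), Pi.single i (1:ℝ))

def evt {n : ℕ} : ℝ × (Fin n → ℝ) := ((1:ℝ), (0 : Fin n → ℝ))

def Pf {n : ℕ} (u : ℝ → (Fin n → ℝ) → ℝ) (i : Fin n) : ℝ × (Fin n → ℝ) → ℝ :=
  Dd (evx i) (Uf u)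

def Sf {n : ℕ} (u : ℝ → (Fin n → ℝ) → ℝ) : ℝ × (Fin n → ℝ) → ℝ :=
  fun p => ∑ i, Pf u i p * Pf u i p

def Phif {n : ℕ} (a c q : ℝ) (u : ℝ → (Fin n → ℝ) → ℝ) : ℝ × (Fin n → ℝ) → ℝ :=
  fun p => q^2 * Sf u p / (Uf u p * Uf u p) + a * c * (1 - Uf u p)

def Psif {n : ℕ} (a c q : ℝ) (u : ℝ → (Fin n → ℝ) → ℝ) (k : Fin n) :
    ℝ × (Fin n → ℝ) → ℝ :=
  fun p => q^2 * (Dd (evx k) (Sf u) p * Uf u p - 2 * (Sf u p * Pf u k p))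
      / (Uf u p * (Uf u p * Uf u p)) - a * c * Pf u k p

section Bridges
open scoped ContDiff
variable {n : ℕ} {u : ℝ → (Fin n → ℝ) → ℝ}

theorem pd_slice' {t : ℝ} {x : Fin n → ℝ} (f : ℝ × (Fin n → ℝ) → ℝ)
    (hf : DifferentiableAt ℝ f (t, x)) (i : Fin n) :
    pd i (fun y => f (t, y)) x = Dd (evx i) f (t, x) :=
  pd_slice f hf i

theorem deriv_slice' {t : ℝ} {x : Fin n → ℝ} (f : ℝ × (Fin n → ℝ) → ℝ)
    (hf : DifferentiableAt ℝ f (t, x)) :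
    deriv (fun τ => f (τ, x)) t = Dd evt f (t, x) :=
  deriv_slice f hf

theorem hPf (hU : ContDiff ℝ ∞ (Uf u)) (i : Fin n) : ContDiff ℝ ∞ (Pf u i) := hU.dd _

theorem hSf (hU : ContDiff ℝ ∞ (Uf u)) : ContDiff ℝ ∞ (Sf u) :=
  ContDiff.sum (fun i _ => (hPf hU i).mul (hPf hU i))

theorem bridge_pd (hU : ContDiff ℝ ∞ (Uf u)) (t : ℝ) (x : Fin n → ℝ) (i : Fin n) :
    pd i (u t) x = Pf u i (t, x) :=
  pd_slice' (Uf u) hU.diffAt i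

theorem bridge_pd2 (hU : ContDiff ℝ ∞ (Uf u)) (t : ℝ) (x : Fin n → ℝ) (i j : Fin n) :
    pd j (pd i (u t)) x = Dd (evx j) (Pf u i) (t, x) := by
  have e : pd i (u t) = fun y => Pf u i (t, y) := funext fun y => bridge_pd hU t y i
  rw [e]
  exact pd_slice' (Pf u i) (hPf hU i).diffAt j

theorem bridge_lap (hU : ContDiff ℝ ∞ (Uf u)) (t : ℝ) (x : Fin n → ℝ) :
    lap (u t) x = ∑ i, Dd (evx i) (Pf u i) (t, x) := by
  rw [lap]
  exact Finset.sum_congr rfl fun i _ => bridge_pd2 hU t x i i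

theorem bridge_dt (hU : ContDiff ℝ ∞ (Uf u)) (t : ℝ) (x : Fin n → ℝ) :
    deriv (fun τ => u τ x) t = Dd evt (Uf u) (t, x) :=
  deriv_slice' (Uf u) hU.diffAt

end Bridges

section PDEFacts
open scoped ContDiff
variable {n : ℕ} {c q a : ℝ} {u : ℝ → (Fin n → ℝ) → ℝ}

theorem factA (hU : ContDiff ℝ ∞ (Uf u))
    (hpde : ∀ t x, 0 ≤ t →
      deriv (fun τ => u τ x) t = lap (u t) x + c * u t x * (1 - u t x))
    {t : ℝ} (ht : 0 ≤ t) (x : Fin n → ℝ) :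
    Dd evt (Uf u) (t, x)
      = (∑ i, Dd (evx i) (Pf u i) (t, x)) + c * Uf u (t, x) * (1 - Uf u (t, x)) := by
  rw [← bridge_dt hU, ← bridge_lap hU]
  exact hpde t x ht

theorem factB (hU : ContDiff ℝ ∞ (Uf u))
    (hpde : ∀ t x, 0 ≤ t →
      deriv (fun τ => u τ x) t = lap (u t) x + c * u t x * (1 - u t x))
    {t : ℝ} (ht : 0 ≤ t) (x : Fin n → ℝ) (k : Fin n) :
    Dd (evx k) (Dd evt (Uf u)) (t, x)
      = (∑ i, Dd (evx k) (Dd (evx i) (Pf u i)) (t, x))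
        + c * ((1 - 2 * Uf u (t, x)) * Pf u k (t, x)) := by
  have hQ : ContDiff ℝ ∞ (fun p => (∑ i, Dd (evx i) (Pf u i) p)
      + c * (Uf u p * (1 - Uf u p))) := by
    refine ContDiff.add (ContDiff.sum fun i _ => (hPf hU i).dd _) ?_
    exact ContDiff.mul contDiff_const (hU.mul (contDiff_const.sub hU))
  have e : (fun y => Dd evt (Uf u) (t, y))
      = fun y => (∑ i, Dd (evx i) (Pf u i) (t, y))
          + c * (Uf u (t, y) * (1 - Uf u (t, y))) := by
    funext y
    rw [factA hU hpde ht y]; ring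
  have h1 : Dd (evx k) (Dd evt (Uf u)) (t, x)
      = pd k (fun y => Dd evt (Uf u) (t, y)) x :=
    (pd_slice' (Dd evt (Uf u)) (hU.dd evt).diffAt k).symm
  rw [h1, e, pd_slice' _ hQ.diffAt k]
  have hsum : DifferentiableAt ℝ (fun p => ∑ i, Dd (evx i) (Pf u i) p) (t, x) :=
    (ContDiff.sum fun i _ => ((hPf hU i).dd (evx i)) : ContDiff ℝ ∞ _).diffAt
  have hprod : DifferentiableAt ℝ (fun p => Uf u p * (1 - Uf u p)) (t, x) :=
    hU.diffAt.mul ((differentiableAt_const (1:ℝ)).sub hU.diffAt)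
  rw [Dd_add hsum (hprod.const_mul c),
    Dd_sum _ _ (fun i _ => ((hPf hU i).dd (evx i)).diffAt),
    Dd_const_mul c hprod,
    Dd_mul hU.diffAt ((differentiableAt_const (1:ℝ)).fun_sub hU.diffAt),
    Dd_sub (differentiableAt_const (1:ℝ)) hU.diffAt, Dd_const]
  show _ = _ + c * ((1 - 2 * Uf u (t, x)) * Dd (evx k) (Uf u) (t, x))
  ring

end PDEFacts

end MainDev

section WBridge
open scoped ContDiff
variable {n : ℕ} {a c q : ℝ} {u : ℝ → (Fin n → ℝ) → ℝ}

theorem DifferentiableAt.div'' {E : Type*} [NormedAddCommGroup E] [NormedSpace ℝ E]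
    {f g : E → ℝ} {p : E} (hf : DifferentiableAt ℝ f p) (hg : DifferentiableAt ℝ g p)
    (h0 : g p ≠ 0) : DifferentiableAt ℝ (fun p => f p / g p) p := by
  simp only [div_eq_mul_inv]
  exact hf.mul (hg.inv h0)

theorem bridge_pdW (hU : ContDiff ℝ ∞ (Uf u)) {t : ℝ} {y : Fin n → ℝ}
    (h0 : u t y ≠ 0) (i : Fin n) :
    pd i (Wfun q u t) y = -q * Uf u (t, y) ^ (-q - 1 : ℝ) * Pf u i (t, y) := by
  have h0' : Uf u (t, y) ≠ 0 := h0
  have hW : DifferentiableAt ℝ (fun p => Uf u p ^ (-q:ℝ)) (t, y) :=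
    hU.diffAt.rpow_const (Or.inl h0')
  have e : pd i (Wfun q u t) y = Dd (evx i) (fun p => Uf u p ^ (-q:ℝ)) (t, y) :=
    pd_slice' _ hW i
  rw [e, Dd_rpow _ hU.diffAt h0']
  rfl

theorem bridge_pdW2 (hU : ContDiff ℝ ∞ (Uf u)) {t : ℝ} {x : Fin n → ℝ}
    (hpos : ∀ y, 0 < u t y) (i j : Fin n) :
    pd i (pd j (Wfun q u t)) x
      = -q * Uf u (t, x) ^ (-q - 1 : ℝ) * Dd (evx i) (Pf u j) (t, x)
        + Pf u j (t, x)
            * (-q * ((-q - 1) * Uf u (t, x) ^ (-q - 1 - 1 : ℝ) * Pf u i (t, x))) := by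
  have h0' : Uf u (t, x) ≠ 0 := (hpos x).ne'
  have e : pd j (Wfun q u t)
      = fun y => -q * Uf u (t, y) ^ (-q - 1 : ℝ) * Pf u j (t, y) :=
    funext fun y => bridge_pdW hU (hpos y).ne' j
  rw [e]
  have hr : DifferentiableAt ℝ (fun p => -q * Uf u p ^ (-q - 1 : ℝ)) (t, x) :=
    (hU.diffAt.rpow_const (Or.inl h0')).const_mul (-q)
  have hd : DifferentiableAt ℝ
      (fun p => -q * Uf u p ^ (-q - 1 : ℝ) * Pf u j p) (t, x) :=
    hr.mul (hPf hU j).diffAt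
  rw [pd_slice' _ hd i,
    Dd_mul hr (hPf hU j).diffAt,
    Dd_const_mul (-q) (hU.diffAt.rpow_const (Or.inl h0')),
    Dd_rpow _ hU.diffAt h0']
  have ePf : Dd (evx i) (Uf u) (t, x) = Pf u i (t, x) := rfl
  rw [ePf]

theorem bridge_Winv (hq : q ≠ 0) {t : ℝ} {y : Fin n → ℝ} (h0 : 0 < u t y) :
    Wfun q u t y ^ (-1 / q : ℝ) = Uf u (t, y) := by
  have h0' : (0:ℝ) < Uf u (t, y) := h0
  show (Uf u (t, y) ^ (-q : ℝ)) ^ (-1 / q : ℝ) = Uf u (t, y)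
  rw [← Real.rpow_mul h0'.le, show (-q * (-1 / q) : ℝ) = 1 by field_simp, Real.rpow_one]

theorem H0_eq_Phi (hU : ContDiff ℝ ∞ (Uf u)) (hq : q ≠ 0) {t : ℝ} {y : Fin n → ℝ}
    (h0 : 0 < u t y) :
    H0fun a c q u t y = Phif a c q u (t, y) := by
  have h0' : (0:ℝ) < Uf u (t, y) := h0
  have hne : Uf u (t, y) ≠ 0 := h0'.ne'
  have e1 : H0fun a c q u t y
      = (∑ i, (pd i (Wfun q u t) y) ^ 2) / (Wfun q u t y) ^ 2
          + a * c * (1 - Wfun q u t y ^ (-1 / q : ℝ)) := rfl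
  rw [e1, bridge_Winv hq h0]
  have e2 : ∀ i : Fin n, (pd i (Wfun q u t) y) ^ 2
      = q ^ 2 * (Uf u (t, y) ^ (-q - 1 : ℝ)) ^ 2 * (Pf u i (t, y) * Pf u i (t, y)) := by
    intro i
    rw [bridge_pdW hU h0.ne' i]
    ring
  rw [Finset.sum_congr rfl fun i _ => e2 i, ← Finset.mul_sum]
  have eS : (∑ i, Pf u i (t, y) * Pf u i (t, y)) = Sf u (t, y) := rfl
  rw [eS]
  have e3 : Wfun q u t y = Uf u (t, y) ^ (-q : ℝ) := rfl
  have e4 : Uf u (t, y) ^ (-q - 1 : ℝ) = Uf u (t, y) ^ (-q : ℝ) / Uf u (t, y) := by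
    rw [Real.rpow_sub h0', Real.rpow_one]
  have hWne : Uf u (t, y) ^ (-q : ℝ) ≠ 0 := (Real.rpow_pos_of_pos h0' _).ne'
  rw [e3, e4]
  show _ = q ^ 2 * Sf u (t, y) / (Uf u (t, y) * Uf u (t, y)) + a * c * (1 - Uf u (t, y))
  field_simp

theorem hPhiDiff (hU : ContDiff ℝ ∞ (Uf u)) {p : ℝ × (Fin n → ℝ)} (h0 : Uf u p ≠ 0) :
    DifferentiableAt ℝ (Phif a c q u) p := by
  have h2 : Uf u p * Uf u p ≠ 0 := mul_ne_zero h0 h0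
  have hfrac : DifferentiableAt ℝ (fun p => q ^ 2 * Sf u p / (Uf u p * Uf u p)) p :=
    DifferentiableAt.div'' ((hSf hU).diffAt.const_mul (q^2)) (hU.diffAt.mul hU.diffAt) h2
  exact hfrac.add (((differentiableAt_const (1:ℝ)).sub hU.diffAt).const_mul (a*c))

theorem dPhi (hU : ContDiff ℝ ∞ (Uf u)) {p : ℝ × (Fin n → ℝ)} (h0 : Uf u p ≠ 0)
    (v : ℝ × (Fin n → ℝ)) :
    Dd v (Phif a c q u) p
      = q ^ 2 * (Dd v (Sf u) p * Uf u p - 2 * (Sf u p * Dd v (Uf u) p))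
          / (Uf u p * (Uf u p * Uf u p)) - a * c * Dd v (Uf u) p := by
  have h2 : Uf u p * Uf u p ≠ 0 := mul_ne_zero h0 h0
  have hnum : DifferentiableAt ℝ (fun p => q ^ 2 * Sf u p) p :=
    (hSf hU).diffAt.const_mul (q^2)
  have hden : DifferentiableAt ℝ (fun p => Uf u p * Uf u p) p :=
    hU.diffAt.mul hU.diffAt
  have hfrac : DifferentiableAt ℝ (fun p => q ^ 2 * Sf u p / (Uf u p * Uf u p)) p :=
    DifferentiableAt.div'' hnum hden h2
  have hlin : DifferentiableAt ℝ (fun p => a * c * (1 - Uf u p)) p :=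
    ((differentiableAt_const (1:ℝ)).sub hU.diffAt).const_mul (a*c)
  have ePhi : Phif a c q u
      = fun p => q ^ 2 * Sf u p / (Uf u p * Uf u p) + a * c * (1 - Uf u p) := rfl
  rw [ePhi, Dd_add hfrac hlin, Dd_div hnum hden h2,
    Dd_const_mul (q^2) (hSf hU).diffAt, Dd_mul hU.diffAt hU.diffAt,
    Dd_const_mul (a*c) ((differentiableAt_const (1:ℝ)).fun_sub hU.diffAt),
    Dd_sub (differentiableAt_const (1:ℝ)) hU.diffAt, Dd_const]
  field_simp
  ring

theorem hPsiDiff (hU : ContDiff ℝ ∞ (Uf u)) (k : Fin n) {p : ℝ × (Fin n → ℝ)}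
    (h0 : Uf u p ≠ 0) : DifferentiableAt ℝ (Psif a c q u k) p := by
  have h3 : Uf u p * (Uf u p * Uf u p) ≠ 0 := mul_ne_zero h0 (mul_ne_zero h0 h0)
  have hnum : DifferentiableAt ℝ
      (fun p => q ^ 2 * (Dd (evx k) (Sf u) p * Uf u p - 2 * (Sf u p * Pf u k p))) p :=
    ((((hSf hU).dd (evx k)).diffAt.mul hU.diffAt).sub
      (((hSf hU).diffAt.mul (hPf hU k).diffAt).const_mul 2)).const_mul (q^2)
  have hfrac : DifferentiableAt ℝ
      (fun p => q ^ 2 * (Dd (evx k) (Sf u) p * Uf u p - 2 * (Sf u p * Pf u k p))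
        / (Uf u p * (Uf u p * Uf u p))) p :=
    DifferentiableAt.div'' hnum (hU.diffAt.mul (hU.diffAt.mul hU.diffAt)) h3
  exact hfrac.sub ((hPf hU k).diffAt.const_mul (a*c))

end WBridge

section Expand
open scoped ContDiff
variable {n : ℕ} {a c q : ℝ} {u : ℝ → (Fin n → ℝ) → ℝ}

theorem dS (hU : ContDiff ℝ ∞ (Uf u)) (v : ℝ × (Fin n → ℝ)) (p : ℝ × (Fin n → ℝ)) :
    Dd v (Sf u) p = ∑ i, 2 * (Pf u i p * Dd v (Pf u i) p) := by
  have e : Sf u = fun p => ∑ i, Pf u i p * Pf u i p := rfl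
  rw [e, Dd_sum _ _ (fun i _ => ((hPf hU i).mul (hPf hU i)).diffAt)]
  refine Finset.sum_congr rfl fun i _ => ?_
  rw [Dd_mul (hPf hU i).diffAt (hPf hU i).diffAt]
  ring

theorem ddS (hU : ContDiff ℝ ∞ (Uf u)) (v w : ℝ × (Fin n → ℝ)) (p : ℝ × (Fin n → ℝ)) :
    Dd w (Dd v (Sf u)) p
      = ∑ i, 2 * (Dd w (Pf u i) p * Dd v (Pf u i) p
          + Pf u i p * Dd w (Dd v (Pf u i)) p) := by
  have e : Dd v (Sf u) = fun p => ∑ i, 2 * (Pf u i p * Dd v (Pf u i) p) :=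
    funext fun p => dS hU v p
  rw [e, Dd_sum _ _ (fun i _ =>
    ((contDiff_const.mul ((hPf hU i).mul ((hPf hU i).dd v))) : ContDiff ℝ ∞ _).diffAt)]
  refine Finset.sum_congr rfl fun i _ => ?_
  rw [Dd_const_mul 2 ((hPf hU i).diffAt.fun_mul ((hPf hU i).dd v).diffAt),
    Dd_mul (hPf hU i).diffAt ((hPf hU i).dd v).diffAt]
  ring

theorem swap3 (hU : ContDiff ℝ ∞ (Uf u)) (p : ℝ × (Fin n → ℝ)) (k i : Fin n) :
    Dd (evx k) (Dd (evx k) (Pf u i)) p = Dd (evx i) (Dd (evx k) (Pf u k)) p := by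
  have e : Dd (evx k) (Pf u i) = Dd (evx i) (Pf u k) :=
    funext fun p => Dd_comm hU p (evx k) (evx i)
  rw [e]
  exact Dd_comm (hPf hU k) p (evx k) (evx i)

theorem swapT (hU : ContDiff ℝ ∞ (Uf u)) (p : ℝ × (Fin n → ℝ)) (i : Fin n) :
    Dd evt (Pf u i) p = Dd (evx i) (Dd evt (Uf u)) p :=
  Dd_comm hU p evt (evx i)

theorem dPsi (hU : ContDiff ℝ ∞ (Uf u)) (k : Fin n) {p : ℝ × (Fin n → ℝ)}
    (h0 : Uf u p ≠ 0) :
    Dd (evx k) (Psif a c q u k) p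
      = q ^ 2 * (Dd (evx k) (Dd (evx k) (Sf u)) p * Uf u p ^ 2
          - 4 * Dd (evx k) (Sf u) p * Pf u k p * Uf u p
          - 2 * Sf u p * Dd (evx k) (Pf u k) p * Uf u p
          + 6 * Sf u p * Pf u k p ^ 2) / Uf u p ^ 4
        - a * c * Dd (evx k) (Pf u k) p := by
  have h3 : Uf u p * (Uf u p * Uf u p) ≠ 0 := mul_ne_zero h0 (mul_ne_zero h0 h0)
  have hDdS : DifferentiableAt ℝ (Dd (evx k) (Sf u)) p := ((hSf hU).dd _).diffAt
  have hN : DifferentiableAt ℝ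
      (fun p => Dd (evx k) (Sf u) p * Uf u p - 2 * (Sf u p * Pf u k p)) p :=
    (hDdS.mul hU.diffAt).sub (((hSf hU).diffAt.mul (hPf hU k).diffAt).const_mul 2)
  have hNq : DifferentiableAt ℝ
      (fun p => q ^ 2 * (Dd (evx k) (Sf u) p * Uf u p - 2 * (Sf u p * Pf u k p))) p :=
    hN.const_mul (q^2)
  have hg : DifferentiableAt ℝ (fun p => Uf u p * (Uf u p * Uf u p)) p :=
    hU.diffAt.mul (hU.diffAt.mul hU.diffAt)
  have ePsi : Psif a c q u k
      = fun p => q ^ 2 * (Dd (evx k) (Sf u) p * Uf u p - 2 * (Sf u p * Pf u k p))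
          / (Uf u p * (Uf u p * Uf u p)) - a * c * Pf u k p := rfl
  rw [ePsi,
    Dd_sub (DifferentiableAt.div'' hNq hg h3) ((hPf hU k).diffAt.const_mul (a*c)),
    Dd_div hNq hg h3,
    Dd_const_mul (q^2) hN,
    Dd_sub (hDdS.fun_mul hU.diffAt) (((hSf hU).diffAt.fun_mul (hPf hU k).diffAt).const_mul 2),
    Dd_mul hDdS hU.diffAt,
    Dd_const_mul 2 ((hSf hU).diffAt.fun_mul (hPf hU k).diffAt),
    Dd_mul (hSf hU).diffAt (hPf hU k).diffAt,
    Dd_mul hU.diffAt (hU.diffAt.fun_mul hU.diffAt),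
    Dd_mul hU.diffAt hU.diffAt,
    Dd_const_mul (a*c) (hPf hU k).diffAt]
  have ePk : Dd (evx k) (Uf u) p = Pf u k p := rfl
  rw [ePk]
  field_simp
  ring

end Expand

section Sums
variable {n : ℕ}

theorem dsum2 (f g : Fin n → Fin n → ℝ) (α β : ℝ) :
    (∑ i, ∑ j, (α * f i j + β * g i j))
      = α * (∑ i, ∑ j, f i j) + β * (∑ i, ∑ j, g i j) := by
  simp only [Finset.sum_add_distrib, ← Finset.mul_sum]

theorem dsum3 (f g e : Fin n → Fin n → ℝ) (α β γ : ℝ) :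
    (∑ i, ∑ j, (α * f i j + β * g i j + γ * e i j))
      = α * (∑ i, ∑ j, f i j) + β * (∑ i, ∑ j, g i j) + γ * (∑ i, ∑ j, e i j) := by
  simp only [Finset.sum_add_distrib, ← Finset.mul_sum]

theorem dprod (f g : Fin n → ℝ) :
    (∑ i, ∑ j, f i * g j) = (∑ i, f i) * (∑ j, g j) := by
  rw [Finset.sum_mul_sum]

theorem lapsum (P : Fin n → ℝ) (h T : Fin n → Fin n → ℝ) (Uv Sv q a c : ℝ) :
    (∑ k, (q ^ 2 * ((∑ i, 2 * (h k i * h k i + P i * T i k)) * Uv ^ 2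
        - 4 * (∑ i, 2 * (P i * h k i)) * P k * Uv
        - 2 * Sv * h k k * Uv + 6 * Sv * P k ^ 2) / Uv ^ 4 - a * c * h k k))
      = q ^ 2 * (2 * (∑ i, ∑ j, h i j * h i j) * Uv ^ 2
          + 2 * (∑ i, P i * ∑ j, T i j) * Uv ^ 2
          - 8 * (∑ i, ∑ j, h i j * (P i * P j)) * Uv
          - 2 * Sv * (∑ i, h i i) * Uv
          + 6 * Sv * (∑ i, P i * P i)) / Uv ^ 4
        - a * c * (∑ i, h i i) := by
  have i1 : ∀ k, (∑ i, 2 * (h k i * h k i + P i * T i k))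
      = 2 * (∑ i, h k i * h k i) + 2 * (∑ i, P i * T i k) := by
    intro k
    simp only [mul_add, Finset.sum_add_distrib, ← Finset.mul_sum]
  have i2 : ∀ k, (4 * ∑ i, 2 * (P i * h k i)) * P k
      = 8 * ∑ i, h k i * (P k * P i) := by
    intro k
    rw [Finset.mul_sum, Finset.sum_mul,
      Finset.sum_congr rfl fun i _ => (by ring :
        4 * (2 * (P i * h k i)) * P k = 8 * (h k i * (P k * P i))),
      ← Finset.mul_sum]
  have ek : ∀ k, q ^ 2 * ((∑ i, 2 * (h k i * h k i + P i * T i k)) * Uv ^ 2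
        - 4 * (∑ i, 2 * (P i * h k i)) * P k * Uv
        - 2 * Sv * h k k * Uv + 6 * Sv * P k ^ 2) / Uv ^ 4 - a * c * h k k
      = (2 * q ^ 2 * Uv ^ 2 / Uv ^ 4) * (∑ i, h k i * h k i)
        + (2 * q ^ 2 * Uv ^ 2 / Uv ^ 4) * (∑ i, P i * T i k)
        + (-(8 * q ^ 2 * Uv / Uv ^ 4)) * (∑ i, h k i * (P k * P i))
        + (-(2 * q ^ 2 * Sv * Uv / Uv ^ 4) - a * c) * h k k
        + (6 * q ^ 2 * Sv / Uv ^ 4) * (P k * P k) := by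
    intro k
    rw [i1 k, i2 k]
    ring
  rw [Finset.sum_congr rfl fun k _ => ek k]
  simp only [Finset.sum_add_distrib, ← Finset.mul_sum]
  rw [show (∑ k, ∑ i, P i * T i k) = ∑ i, P i * ∑ j, T i j from by
    rw [Finset.sum_comm]
    exact Finset.sum_congr rfl fun i _ => by rw [← Finset.mul_sum]]
  ring

theorem timesum (P R : Fin n → ℝ) (c Uv : ℝ) :
    (∑ i, 2 * (P i * (R i + c * ((1 - 2 * Uv) * P i))))
      = 2 * (∑ i, P i * R i) + 2 * c * ((1 - 2 * Uv) * (∑ i, P i * P i)) := by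
  rw [Finset.sum_congr rfl fun i _ => (by ring :
    2 * (P i * (R i + c * ((1 - 2 * Uv) * P i)))
      = 2 * (P i * R i) + (2 * c * (1 - 2 * Uv)) * (P i * P i))]
  rw [Finset.sum_add_distrib, ← Finset.mul_sum, ← Finset.mul_sum]
  ring

end Sums

/-- Euclidean specialization of identity (3.26):
`(Δ − ∂ₜ)H₀ = (4(1−q)/q)·∇²W(∇W,∇W)/W³ + (2(q−2)/q)·|∇W|⁴/W⁴ + 2‖∇²W‖²/W²`
`+ ac²·W^{−1/q}(1 − W^{−1/q}) + 2c·W^{−1/q}·|∇W|²/W²`. -/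
theorem fisher_kpp_H0_evolution (n : ℕ) (hn : 1 ≤ n) (c q a : ℝ)
    (hc : 0 < c) (hq : 0 < q) (ha : 0 < a)
    (u : ℝ → (Fin n → ℝ) → ℝ)
    (hu : ContDiff ℝ (⊤ : ℕ∞) (fun p : ℝ × (Fin n → ℝ) => u p.1 p.2))
    (hpos : ∀ t x, 0 ≤ t → 0 < u t x)
    (hpde : ∀ t x, 0 ≤ t →
      deriv (fun τ => u τ x) t = lap (u t) x + c * u t x * (1 - u t x)) :
    ∀ t x, 0 ≤ t →
      lap (H0fun a c q u t) x - deriv (fun τ => H0fun a c q u τ x) t =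
        (4 * (1 - q) / q) * (∑ i, ∑ j, pd i (pd j (Wfun q u t)) x
              * pd i (Wfun q u t) x * pd j (Wfun q u t) x) / (Wfun q u t x) ^ 3
          + (2 * (q - 2) / q) * (∑ i, (pd i (Wfun q u t) x) ^ 2) ^ 2
              / (Wfun q u t x) ^ 4
          + 2 * (∑ i, ∑ j, (pd i (pd j (Wfun q u t)) x) ^ 2) / (Wfun q u t x) ^ 2
          + a * c ^ 2 * (Wfun q u t x ^ (-1 / q : ℝ))
              * (1 - Wfun q u t x ^ (-1 / q : ℝ))
          + 2 * c * (Wfun q u t x ^ (-1 / q : ℝ))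
              * (∑ i, (pd i (Wfun q u t) x) ^ 2) / (Wfun q u t x) ^ 2 := by
  intro t x ht
  have hq' : q ≠ 0 := hq.ne'
  have hU : ContDiff ℝ ∞ (Uf u) := hu.of_le (by simp)
  have hposx : ∀ y, 0 < u t y := fun y => hpos t y ht
  have h0' : (0:ℝ) < Uf u (t, x) := hposx x
  have hne : Uf u (t, x) ≠ 0 := h0'.ne'
  have hXq : Uf u (t, x) ^ (-q : ℝ) ≠ 0 := (Real.rpow_pos_of_pos h0' _).ne'
  -- time derivative of H0
  have hO : IsOpen {p : ℝ × (Fin n → ℝ) | 0 < Uf u p} :=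
    isOpen_lt continuous_const hU.continuous
  have hmem : ∀ᶠ τ in nhds t, 0 < Uf u (τ, x) :=
    (continuous_id.prodMk continuous_const :
      Continuous fun τ : ℝ => ((τ, x) : ℝ × (Fin n → ℝ))).continuousAt.preimage_mem_nhds
      (hO.mem_nhds h0')
  have hevent : (fun τ => H0fun a c q u τ x) =ᶠ[nhds t] fun τ => Phif a c q u (τ, x) := by
    filter_upwards [hmem] with τ hτ
    exact H0_eq_Phi hU hq' hτ
  have hT : deriv (fun τ => H0fun a c q u τ x) t = Dd evt (Phif a c q u) (t, x) := by
    rw [hevent.deriv_eq]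
    exact deriv_slice' _ (hPhiDiff hU hne)
  -- Laplacian of H0
  have hH0t : H0fun a c q u t = fun y => Phif a c q u (t, y) :=
    funext fun y => H0_eq_Phi hU hq' (hposx y)
  have hpdH0 : ∀ k : Fin n, pd k (H0fun a c q u t) = fun y => Psif a c q u k (t, y) := by
    intro k
    funext y
    have hney : Uf u (t, y) ≠ 0 := (hposx y).ne'
    rw [hH0t, pd_slice' _ (hPhiDiff hU hney) k, dPhi hU hney (evx k)]
    rfl
  have hlap : lap (H0fun a c q u t) x = ∑ k, Dd (evx k) (Psif a c q u k) (t, x) := by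
    rw [lap]
    refine Finset.sum_congr rfl fun k _ => ?_
    rw [hpdH0 k]
    exact pd_slice' _ (hPsiDiff hU k hne) k
  -- per-k expansion of the Laplacian terms
  have hk : ∀ k : Fin n, Dd (evx k) (Psif a c q u k) (t, x)
      = q ^ 2 * ((∑ i, 2 * (Dd (evx k) (Pf u i) (t, x) * Dd (evx k) (Pf u i) (t, x)
            + Pf u i (t, x) * Dd (evx i) (Dd (evx k) (Pf u k)) (t, x)))
              * Uf u (t, x) ^ 2
          - 4 * (∑ i, 2 * (Pf u i (t, x) * Dd (evx k) (Pf u i) (t, x)))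
              * Pf u k (t, x) * Uf u (t, x)
          - 2 * Sf u (t, x) * Dd (evx k) (Pf u k) (t, x) * Uf u (t, x)
          + 6 * Sf u (t, x) * Pf u k (t, x) ^ 2) / Uf u (t, x) ^ 4
        - a * c * Dd (evx k) (Pf u k) (t, x) := by
    intro k
    rw [dPsi hU k hne, ddS hU (evx k) (evx k) (t, x), dS hU (evx k) (t, x)]
    simp only [swap3 hU (t, x) k]
  have hlapsum : (∑ k, Dd (evx k) (Psif a c q u k) (t, x))
      = q ^ 2 * (2 * (∑ i, ∑ j, Dd (evx i) (Pf u j) (t, x) * Dd (evx i) (Pf u j) (t, x))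
              * Uf u (t, x) ^ 2
          + 2 * (∑ i, Pf u i (t, x) * ∑ j, Dd (evx i) (Dd (evx j) (Pf u j)) (t, x))
              * Uf u (t, x) ^ 2
          - 8 * (∑ i, ∑ j, Dd (evx i) (Pf u j) (t, x)
              * (Pf u i (t, x) * Pf u j (t, x))) * Uf u (t, x)
          - 2 * Sf u (t, x) * (∑ i, Dd (evx i) (Pf u i) (t, x)) * Uf u (t, x)
          + 6 * Sf u (t, x) * (∑ i, Pf u i (t, x) * Pf u i (t, x))) / Uf u (t, x) ^ 4
        - a * c * (∑ i, Dd (evx i) (Pf u i) (t, x)) := by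
    rw [Finset.sum_congr rfl fun k _ => hk k]
    exact lapsum (fun i => Pf u i (t, x)) (fun i j => Dd (evx i) (Pf u j) (t, x))
      (fun i j => Dd (evx i) (Dd (evx j) (Pf u j)) (t, x)) (Uf u (t, x)) (Sf u (t, x)) q a c
  -- time derivative expansion
  have hDtS : Dd evt (Sf u) (t, x)
      = 2 * (∑ i, Pf u i (t, x) * ∑ j, Dd (evx i) (Dd (evx j) (Pf u j)) (t, x))
        + 2 * c * ((1 - 2 * Uf u (t, x)) * (∑ i, Pf u i (t, x) * Pf u i (t, x))) := by
    rw [dS hU evt (t, x)]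
    simp only [swapT hU (t, x)]
    simp only [factB hU hpde ht x]
    exact timesum (fun i => Pf u i (t, x))
      (fun i => ∑ j, Dd (evx i) (Dd (evx j) (Pf u j)) (t, x)) c (Uf u (t, x))
  -- RHS conversions
  have eS : (∑ i, Pf u i (t, x) * Pf u i (t, x)) = Sf u (t, x) := rfl
  have hsum1 : (∑ i, ∑ j, pd i (pd j (Wfun q u t)) x
        * pd i (Wfun q u t) x * pd j (Wfun q u t) x)
      = (-(q^3) * (Uf u (t, x) ^ (-q - 1 : ℝ) * Uf u (t, x) ^ (-q - 1 : ℝ)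
            * Uf u (t, x) ^ (-q - 1 : ℝ)))
          * (∑ i, ∑ j, Dd (evx i) (Pf u j) (t, x) * (Pf u i (t, x) * Pf u j (t, x)))
        + (q^3 * (q + 1) * (Uf u (t, x) ^ (-q - 1 : ℝ) * Uf u (t, x) ^ (-q - 1 : ℝ)
            * Uf u (t, x) ^ (-q - 1 - 1 : ℝ)))
          * (Sf u (t, x) * Sf u (t, x)) := by
    have e1 : ∀ i j : Fin n, pd i (pd j (Wfun q u t)) x
          * pd i (Wfun q u t) x * pd j (Wfun q u t) x
        = (-(q^3) * (Uf u (t, x) ^ (-q - 1 : ℝ) * Uf u (t, x) ^ (-q - 1 : ℝ)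
              * Uf u (t, x) ^ (-q - 1 : ℝ)))
            * (Dd (evx i) (Pf u j) (t, x) * (Pf u i (t, x) * Pf u j (t, x)))
          + (q^3 * (q + 1) * (Uf u (t, x) ^ (-q - 1 : ℝ) * Uf u (t, x) ^ (-q - 1 : ℝ)
              * Uf u (t, x) ^ (-q - 1 - 1 : ℝ)))
            * ((Pf u i (t, x) * Pf u i (t, x)) * (Pf u j (t, x) * Pf u j (t, x))) := by
      intro i j
      rw [bridge_pdW2 hU hposx i j, bridge_pdW hU (hposx x).ne' i,
        bridge_pdW hU (hposx x).ne' j]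
      ring
    rw [Finset.sum_congr rfl fun i _ => Finset.sum_congr rfl fun j _ => e1 i j,
      dsum2 (fun i j => Dd (evx i) (Pf u j) (t, x) * (Pf u i (t, x) * Pf u j (t, x)))
        (fun i j => (Pf u i (t, x) * Pf u i (t, x)) * (Pf u j (t, x) * Pf u j (t, x))) _ _,
      dprod (fun i => Pf u i (t, x) * Pf u i (t, x))
        (fun j => Pf u j (t, x) * Pf u j (t, x)), eS]
  have hsum2 : (∑ i, (pd i (Wfun q u t) x) ^ 2)
      = (q^2 * (Uf u (t, x) ^ (-q - 1 : ℝ) * Uf u (t, x) ^ (-q - 1 : ℝ))) * Sf u (t, x) := by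
    have e1 : ∀ i : Fin n, (pd i (Wfun q u t) x) ^ 2
        = (q^2 * (Uf u (t, x) ^ (-q - 1 : ℝ) * Uf u (t, x) ^ (-q - 1 : ℝ)))
            * (Pf u i (t, x) * Pf u i (t, x)) := by
      intro i
      rw [bridge_pdW hU (hposx x).ne' i]
      ring
    rw [Finset.sum_congr rfl fun i _ => e1 i, ← Finset.mul_sum, eS]
  have hsum3 : (∑ i, ∑ j, (pd i (pd j (Wfun q u t)) x) ^ 2)
      = (q^2 * (Uf u (t, x) ^ (-q - 1 : ℝ) * Uf u (t, x) ^ (-q - 1 : ℝ)))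
          * (∑ i, ∑ j, Dd (evx i) (Pf u j) (t, x) * Dd (evx i) (Pf u j) (t, x))
        + (-(2 * q^2 * (q + 1)) * (Uf u (t, x) ^ (-q - 1 : ℝ)
            * Uf u (t, x) ^ (-q - 1 - 1 : ℝ)))
          * (∑ i, ∑ j, Dd (evx i) (Pf u j) (t, x) * (Pf u i (t, x) * Pf u j (t, x)))
        + (q^2 * (q + 1) * (q + 1) * (Uf u (t, x) ^ (-q - 1 - 1 : ℝ)
            * Uf u (t, x) ^ (-q - 1 - 1 : ℝ)))
          * (Sf u (t, x) * Sf u (t, x)) := by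
    have e1 : ∀ i j : Fin n, (pd i (pd j (Wfun q u t)) x) ^ 2
        = (q^2 * (Uf u (t, x) ^ (-q - 1 : ℝ) * Uf u (t, x) ^ (-q - 1 : ℝ)))
            * (Dd (evx i) (Pf u j) (t, x) * Dd (evx i) (Pf u j) (t, x))
          + (-(2 * q^2 * (q + 1)) * (Uf u (t, x) ^ (-q - 1 : ℝ)
              * Uf u (t, x) ^ (-q - 1 - 1 : ℝ)))
            * (Dd (evx i) (Pf u j) (t, x) * (Pf u i (t, x) * Pf u j (t, x)))
          + (q^2 * (q + 1) * (q + 1) * (Uf u (t, x) ^ (-q - 1 - 1 : ℝ)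
              * Uf u (t, x) ^ (-q - 1 - 1 : ℝ)))
            * ((Pf u i (t, x) * Pf u i (t, x)) * (Pf u j (t, x) * Pf u j (t, x))) := by
      intro i j
      rw [bridge_pdW2 hU hposx i j]
      ring
    rw [Finset.sum_congr rfl fun i _ => Finset.sum_congr rfl fun j _ => e1 i j,
      dsum3 (fun i j => Dd (evx i) (Pf u j) (t, x) * Dd (evx i) (Pf u j) (t, x))
        (fun i j => Dd (evx i) (Pf u j) (t, x) * (Pf u i (t, x) * Pf u j (t, x)))
        (fun i j => (Pf u i (t, x) * Pf u i (t, x)) * (Pf u j (t, x) * Pf u j (t, x))) _ _ _,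
      dprod (fun i => Pf u i (t, x) * Pf u i (t, x))
        (fun j => Pf u j (t, x) * Pf u j (t, x)), eS]
  -- assemble
  have eX1 : Uf u (t, x) ^ (-q - 1 : ℝ) = Uf u (t, x) ^ (-q : ℝ) / Uf u (t, x) := by
    rw [Real.rpow_sub h0', Real.rpow_one]
  have eX2 : Uf u (t, x) ^ (-q - 1 - 1 : ℝ)
      = Uf u (t, x) ^ (-q : ℝ) / Uf u (t, x) / Uf u (t, x) := by
    rw [Real.rpow_sub h0' (-q - 1) 1, Real.rpow_one, eX1]
  rw [hlap, hT, hlapsum, dPhi hU hne evt, hDtS, factA hU hpde ht x,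
    bridge_Winv hq' (hposx x), hsum1, hsum2, hsum3,
    show Wfun q u t x = Uf u (t, x) ^ (-q : ℝ) from rfl, eX1, eX2, eS]
  field_simp
  ring
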